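/- arXiv:0705.1992 — 3 statements merged into one kernel-verified Lean document; each statement's English description precedes it below -/
import Mathlib

section
/- For each pair (α, β) in the set {(55,55), (61,52), (49,58), (43,61), (67,49), (37,64)}, there is no integer t such that both (20t + α)/33 and (-10t + β)/33 are non-negative integers. -/
theorem stmt5 :
    ∀ α β : ℤ, (α, β) ∈ ({(55,55), (61,52), (49,58), (43,61), (67,49), (37,64)} : Set (ℤ × ℤ)) →
      ¬ ∃ t : ℤ, (∃ k : ℤ, 0 ≤ k ∧ 20*t + α = 33 * k) ∧
        (∃ k : ℤ, 0 ≤ k ∧ -10*t + β = 33 * k) := by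
  intro α β h
  simp only [Set.mem_insert_iff, Set.mem_singleton_iff, Prod.mk.injEq] at h
  rintro ⟨t, ⟨k1, hk1, e1⟩, ⟨k2, hk2, e2⟩⟩
  rcases h with ⟨h1, h2⟩ | ⟨h1, h2⟩ | ⟨h1, h2⟩ | ⟨h1, h2⟩ | ⟨h1, h2⟩ | ⟨h1, h2⟩ <;> subst h1 <;> subst h2 <;> omega
end

section
/- For each pair (α, β) in {(23,23), (29,20), (17,26), (11,29), (35,17), (5,32)}, there is no integer t such that both (44t + α)/69 and (-22t + β)/69 are non-negative integers. -/
theorem stmt11 :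
    ∀ α β : ℤ, (α, β) ∈ ({(23,23), (29,20), (17,26), (11,29), (35,17), (5,32)} : Set (ℤ × ℤ)) →
      ¬ ∃ t : ℤ, (∃ k : ℤ, 0 ≤ k ∧ 44*t + α = 69 * k) ∧
        (∃ k : ℤ, 0 ≤ k ∧ -22*t + β = 69 * k) := by
  intro α β h
  simp only [Set.mem_insert_iff, Set.mem_singleton_iff, Prod.mk.injEq] at h
  rintro ⟨t, ⟨k1, hk1, e1⟩, ⟨k2, hk2, e2⟩⟩
  rcases h with ⟨h1, h2⟩ | ⟨h1, h2⟩ | ⟨h1, h2⟩ | ⟨h1, h2⟩ | ⟨h1, h2⟩ | ⟨h1, h2⟩ <;> subst h1 <;> subst h2 <;> omega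
end

section
/- Suppose integers t1, t2 satisfy: (10t1 + 32)/22, (-10t1 + 34)/22, (10t2 + 50)/22, and (-10t2 + 60)/22 are all non-negative integers. Then t1 = -1 and t2 ∈ {-5, 6}. Moreover, if additionally a, b, c are integers with a + b + c = 1, 7a - b + c = t1, 3a - 5b - c = t2, then (a, b, c) = (0, 1, 0) and (7a - 9b + 240)/22 = 231/22 is not an integer. -/
theorem stmt18 (t1 t2 : ℤ)
    (h1 : ∃ k : ℤ, 0 ≤ k ∧ 10*t1 + 32 = 22 * k)
    (h2 : ∃ k : ℤ, 0 ≤ k ∧ -10*t1 + 34 = 22 * k)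
    (h3 : ∃ k : ℤ, 0 ≤ k ∧ 10*t2 + 50 = 22 * k)
    (h4 : ∃ k : ℤ, 0 ≤ k ∧ -10*t2 + 60 = 22 * k) :
    t1 = -1 ∧ (t2 = -5 ∨ t2 = 6) ∧
    ∀ a b c : ℤ, a + b + c = 1 → 7*a - b + c = t1 → 3*a - 5*b - c = t2 →
      (a, b, c) = (0, 1, 0) ∧ ¬ ((22 : ℤ) ∣ (7*a - 9*b + 240)) := by
  obtain ⟨k1, hk1, e1⟩ := h1
  obtain ⟨k2, hk2, e2⟩ := h2
  obtain ⟨k3, hk3, e3⟩ := h3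
  obtain ⟨k4, hk4, e4⟩ := h4
  refine ⟨by omega, by omega, ?_⟩
  intro a b c hs h7 h3
  have habc : a = 0 ∧ b = 1 ∧ c = 0 := by omega
  obtain ⟨ha, hb, hc⟩ := habc
  subst ha hb hc
  exact ⟨rfl, by omega⟩
end
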